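/- Suppose an interconnection (V, B_d, B_r) has the structural synchronization property, i.e. there exist Laplacians D ∈ lap(V, B_d) and R ∈ lap(V, B_r) with Re λ₂(D + iR) > 0. Then the graph (V, B_d ∪ B_r) is connected and B_d is nonempty. -/

import Mathlib

open Matrix Polynomial

/-- `G` is the incidence matrix of a graph: every column is `e_k - e_ℓ`
for some pair of distinct vertices `k, ℓ`. -/
def IsIncidence {q p : ℕ} (G : Matrix (Fin q) (Fin p) ℝ) : Prop :=
  ∀ j : Fin p, ∃ k ℓ : Fin q, k ≠ ℓ ∧
    ∀ i : Fin q, G i j = (if i = k then 1 else 0) - (if i = ℓ then 1 else 0)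

/-- The complex matrix `D + iR` built from two real matrices. -/
noncomputable def cM {q : ℕ} (D R : Matrix (Fin q) (Fin q) ℝ) :
    Matrix (Fin q) (Fin q) ℂ :=
  D.map (fun a => (a : ℂ)) + Complex.I • (R.map (fun a => (a : ℂ)))

/-- `Re λ₂(M) > 0`: at most one eigenvalue (with multiplicity), ordered by real
part, has nonpositive real part. -/
noncomputable def reLam2Pos {q : ℕ} (M : Matrix (Fin q) (Fin q) ℂ) : Prop :=
  (M.charpoly.roots.filter (fun μ : ℂ => μ.re ≤ 0)).card ≤ 1

/-- `Re λ₂(M) ≤ 0`: at least two eigenvalues (with multiplicity), ordered by real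
part, have nonpositive real part. -/
noncomputable def reLam2Nonpos {q : ℕ} (M : Matrix (Fin q) (Fin q) ℂ) : Prop :=
  2 ≤ (M.charpoly.roots.filter (fun μ : ℂ => μ.re ≤ 0)).card

/-- The weighted Laplacian `G Λ Gᵀ`. -/
def lapOf {q p : ℕ} (G : Matrix (Fin q) (Fin p) ℝ) (w : Fin p → ℝ) :
    Matrix (Fin q) (Fin q) ℝ :=
  G * diagonal w * Gᵀ

/-! Every incidence matrix annihilates the constant vectors, so `D + iR` kills `1`. A nonconstant
vector in the common kernel of `Gdᵀ` and `Grᵀ` is a second, independent null vector, making `0` a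
root of multiplicity at least two of the characteristic polynomial. Without dissipative edges
`D = 0`, and `D + iR = iR` with `R` real symmetric has only purely imaginary eigenvalues, of which
there are `q ≥ 2`. Either way two eigenvalues have nonpositive real part. -/

namespace Matrix

variable {K : Type*} [Field K] [DecidableEq K] {n : Type*} [Fintype n] [DecidableEq n]

theorem finrank_ker_toLin'_le_count_roots_zero (M : Matrix n n K) :
    Module.finrank K (LinearMap.ker (toLin' M)) ≤ M.charpoly.roots.count 0 := by
  rw [count_roots, rootMultiplicity_eq_natTrailingDegree',
    ← charpoly_toLin' M, ← LinearMap.finrank_maxGenEigenspace_zero_eq]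
  refine Submodule.finrank_mono fun x hx => ?_
  rw [Module.End.mem_maxGenEigenspace]
  exact ⟨1, by simpa using hx⟩

theorem two_le_count_roots_zero_of_linearIndependent (M : Matrix n n K) {u v : n → K}
    (hu : M *ᵥ u = 0) (hv : M *ᵥ v = 0) (huv : LinearIndependent K ![u, v]) :
    2 ≤ M.charpoly.roots.count 0 := by
  have hspan : Submodule.span K (Set.range ![u, v]) ≤ LinearMap.ker (toLin' M) := by
    rw [Submodule.span_le, Set.range_subset_iff]
    intro i
    fin_cases i <;> simpa
  calc 2 = Module.finrank K (Submodule.span K (Set.range ![u, v])) := by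
        simp [finrank_span_eq_card huv]
    _ ≤ Module.finrank K (LinearMap.ker (toLin' M)) := Submodule.finrank_mono hspan
    _ ≤ _ := M.finrank_ker_toLin'_le_count_roots_zero

theorem IsHermitian.re_eq_zero_of_mem_roots_charpoly_I_smul {A : Matrix n n ℂ}
    (hA : A.IsHermitian) {μ : ℂ} (hμ : μ ∈ (Complex.I • A).charpoly.roots) : μ.re = 0 := by
  rw [mem_roots (charpoly_monic _).ne_zero, ← mem_spectrum_iff_isRoot_charpoly,
    ← Units.val_mk0 Complex.I_ne_zero, ← Units.smul_def, spectrum.unit_smul_eq_smul] at hμ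
  obtain ⟨ν, hν, rfl⟩ := hμ
  rw [mem_spectrum_iff_isRoot_charpoly, ← mem_roots (charpoly_monic _).ne_zero,
    hA.roots_charpoly_eq_eigenvalues] at hν
  obtain ⟨i, -, rfl⟩ := Multiset.mem_map.1 hν
  simp

end Matrix

theorem reLam2Nonpos.not_reLam2Pos {q : ℕ} {M : Matrix (Fin q) (Fin q) ℂ}
    (h : reLam2Nonpos M) : ¬ reLam2Pos M := by
  unfold reLam2Nonpos at h
  unfold reLam2Pos
  omega

theorem reLam2Nonpos_of_two_le_count_roots_zero {q : ℕ} {M : Matrix (Fin q) (Fin q) ℂ}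
    (h : 2 ≤ M.charpoly.roots.count 0) : reLam2Nonpos M := by
  refine h.trans ?_
  rw [Multiset.count_eq_card_filter_eq]
  exact Multiset.card_le_card (Multiset.monotone_filter_right _ fun μ hμ => by simp [← hμ])

theorem reLam2Nonpos_of_forall_re_eq_zero {q : ℕ} (hq : 2 ≤ q) {M : Matrix (Fin q) (Fin q) ℂ}
    (h : ∀ μ ∈ M.charpoly.roots, μ.re = 0) : reLam2Nonpos M := by
  rw [reLam2Nonpos, Multiset.filter_eq_self.2 fun μ hμ => (h μ hμ).le,
    splits_iff_card_roots.1 (IsAlgClosed.splits _), charpoly_natDegree_eq_dim]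
  simpa using hq

section Complexification

variable {q : ℕ}

theorem cM_mulVec_ofReal_eq_zero {D R : Matrix (Fin q) (Fin q) ℝ} {x : Fin q → ℝ}
    (hD : D *ᵥ x = 0) (hR : R *ᵥ x = 0) : cM D R *ᵥ (fun i => (x i : ℂ)) = 0 := by
  have hmap (A : Matrix (Fin q) (Fin q) ℝ) :
      A.map (fun a => (a : ℂ)) *ᵥ (fun i => (x i : ℂ)) = fun i => ((A *ᵥ x) i : ℂ) :=
    funext fun i => (RingHom.map_mulVec Complex.ofRealHom A x i).symm
  rw [cM, add_mulVec, smul_mulVec, hmap, hmap, hD, hR]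
  ext i
  simp

theorem linearIndependent_one_ofReal_of_ne {ι : Type*} {v : ι → ℝ} {i j : ι} (hij : v i ≠ v j) :
    LinearIndependent ℂ ![fun _ => (1 : ℂ), fun k => (v k : ℂ)] := by
  rw [LinearIndependent.pair_iff]
  intro s t hst
  have hi := congrFun hst i
  have hj := congrFun hst j
  simp only [Pi.add_apply, Pi.smul_apply, smul_eq_mul, mul_one, Pi.zero_apply] at hi hj
  have ht : t = 0 := by
    have : t * ((v i : ℂ) - v j) = 0 := by linear_combination hi - hj
    exact (mul_eq_zero.1 this).resolve_right (sub_ne_zero.2 (by exact_mod_cast hij))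
  subst ht
  simpa using hi

theorem reLam2Nonpos_cM_of_ne {D R : Matrix (Fin q) (Fin q) ℝ}
    (hD₁ : D *ᵥ (fun _ => 1) = 0) (hR₁ : R *ᵥ (fun _ => 1) = 0)
    {v : Fin q → ℝ} (hDv : D *ᵥ v = 0) (hRv : R *ᵥ v = 0) {i j : Fin q} (hij : v i ≠ v j) :
    reLam2Nonpos (cM D R) := by
  refine reLam2Nonpos_of_two_le_count_roots_zero
    ((cM D R).two_le_count_roots_zero_of_linearIndependent ?_
      (cM_mulVec_ofReal_eq_zero hDv hRv) (linearIndependent_one_ofReal_of_ne hij))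
  simpa using cM_mulVec_ofReal_eq_zero hD₁ hR₁

theorem reLam2Nonpos_cM_zero_left (hq : 2 ≤ q) {R : Matrix (Fin q) (Fin q) ℝ}
    (hR : R.IsHermitian) : reLam2Nonpos (cM 0 R) := by
  have hR' : (R.map (fun a => (a : ℂ))).IsHermitian :=
    hR.map _ fun a => (Complex.conj_ofReal a).symm
  refine reLam2Nonpos_of_forall_re_eq_zero hq fun μ hμ => ?_
  rw [cM, Matrix.map_zero _ Complex.ofReal_zero, zero_add] at hμ
  exact hR'.re_eq_zero_of_mem_roots_charpoly_I_smul hμ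

end Complexification

section Laplacian

variable {q p : ℕ}

theorem IsIncidence.transpose_mulVec_const {G : Matrix (Fin q) (Fin p) ℝ} (hG : IsIncidence G)
    (c : ℝ) : Gᵀ *ᵥ (fun _ => c) = 0 := by
  funext j
  obtain ⟨k, l, -, hcol⟩ := hG j
  simp [mulVec, dotProduct, hcol, sub_mul, Finset.sum_sub_distrib]

theorem lapOf_mulVec_eq_zero {G : Matrix (Fin q) (Fin p) ℝ} (w : Fin p → ℝ) {x : Fin q → ℝ}
    (hx : Gᵀ *ᵥ x = 0) : lapOf G w *ᵥ x = 0 := by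
  rw [lapOf, ← mulVec_mulVec, hx, mulVec_zero]

theorem isHermitian_lapOf (G : Matrix (Fin q) (Fin p) ℝ) (w : Fin p → ℝ) :
    (lapOf G w).IsHermitian := by
  simpa [lapOf, conjTranspose_eq_transpose_of_trivial] using
    isHermitian_mul_mul_conjTranspose G (isHermitian_diagonal w)

theorem lapOf_fin_zero (G : Matrix (Fin q) (Fin 0) ℝ) (w : Fin 0 → ℝ) : lapOf G w = 0 := by
  simp [lapOf, Subsingleton.elim G 0]

end Laplacian

/-- If an interconnection has the structural synchronization property, then the
union graph is connected and the dissipative edge set is nonempty. -/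
theorem stmt13 {q pd pr : ℕ} (hq : 2 ≤ q)
    (Gd : Matrix (Fin q) (Fin pd) ℝ) (Gr : Matrix (Fin q) (Fin pr) ℝ)
    (hGd : IsIncidence Gd) (hGr : IsIncidence Gr)
    (hSS : ∃ (wd : Fin pd → ℝ) (wr : Fin pr → ℝ),
      (∀ i, 0 < wd i) ∧ (∀ i, 0 < wr i) ∧
      reLam2Pos (cM (lapOf Gd wd) (lapOf Gr wr))) :
    (∀ v : Fin q → ℝ, Gdᵀ.mulVec v = 0 → Grᵀ.mulVec v = 0 →
        ∃ c : ℝ, v = fun _ => c) ∧ 0 < pd := by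
  obtain ⟨wd, wr, -, -, hpos⟩ := hSS
  refine ⟨fun v hdv hrv => ?_, ?_⟩
  · by_contra! hv
    obtain ⟨i, hi⟩ : ∃ i, v i ≠ v ⟨0, by omega⟩ := by
      by_contra! h
      exact hv _ (funext h)
    exact (reLam2Nonpos_cM_of_ne
      (lapOf_mulVec_eq_zero wd (hGd.transpose_mulVec_const 1))
      (lapOf_mulVec_eq_zero wr (hGr.transpose_mulVec_const 1))
      (lapOf_mulVec_eq_zero wd hdv) (lapOf_mulVec_eq_zero wr hrv) hi).not_reLam2Pos hpos
  · by_contra! hpd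
    obtain rfl : pd = 0 := by omega
    rw [lapOf_fin_zero] at hpos
    exact (reLam2Nonpos_cM_zero_left hq (isHermitian_lapOf Gr wr)).not_reLam2Pos hpos
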